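/- arXiv:2105.09254 — 2 statements merged into one kernel-verified Lean document; each statement's English description precedes it below -/
import Mathlib

section
/- Second-order kernel expansion lemma: let g, f : ℝ → ℝ be three times continuously differentiable with g, f and their first three derivatives bounded. Then for each a ∈ ℝ, as h → 0⁺, ∫ k(u) (g(a+uh) − g(a)) f(a+uh) du = h² κ₂ ( g'(a) f'(a) + (1/2) g''(a) f(a) ) + O(h³). -/
/-!
Put `φ = (g - g a) * f`, so that `φ a = 0`, `φ' a = g' a * f a` and
`φ'' a = g'' a * f a + 2 * g' a * f' a`. Leibniz's rule bounds `φ'''`, so Taylor's theorem gives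
`|φ (a + t) - φ' a * t - φ'' a / 2 * t ^ 2| ≤ K * |t| ^ 3`. Integrating against `k u` with
`t = u * h`, the linear term vanishes because `k` has mean zero, the quadratic term is
`h ^ 2 * κ₂ * φ'' a / 2`, and the remainder is at most `K * |h| ^ 3 * ∫ |u| ^ 3 * k u`.
-/

open MeasureTheory Filter Real Set Asymptotics
open scoped Nat

theorem abs_sub_taylor_le_of_abs_iteratedDeriv_le {f : ℝ → ℝ} {n : ℕ} (hf : ContDiff ℝ (n + 1) f)
    {M : ℝ} (hM : ∀ y, |iteratedDeriv (n + 1) f y| ≤ M) (x₀ x : ℝ) :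
    |f x - ∑ i ∈ Finset.range (n + 1), iteratedDeriv i f x₀ / i ! * (x - x₀) ^ i|
      ≤ M * |x - x₀| ^ (n + 1) / (n + 1)! := by
  rcases eq_or_ne x₀ x with rfl | hx
  · simp [Finset.sum_range_succ']
  obtain ⟨y, -, hy⟩ := taylor_mean_remainder_lagrange_iteratedDeriv hx hf.contDiffOn
  have htaylor : taylorWithinEval f n (uIcc x₀ x) x₀ x =
      ∑ i ∈ Finset.range (n + 1), iteratedDeriv i f x₀ / i ! * (x - x₀) ^ i := by
    rw [taylor_within_apply]
    refine Finset.sum_congr rfl fun i hi => ?_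
    have hin : (i : WithTop ℕ∞) ≤ n + 1 := by
      have := Finset.mem_range.mp hi; exact_mod_cast (by omega : i ≤ n + 1)
    rw [iteratedDerivWithin_eq_iteratedDeriv (uniqueDiffOn_uIcc hx)
      ((hf.of_le hin).contDiffAt) left_mem_uIcc, smul_eq_mul]
    ring
  rw [← htaylor, hy, abs_div, abs_mul, abs_pow, Nat.abs_cast]
  gcongr
  exact hM y

theorem abs_iteratedDeriv_mul_le {u v : ℝ → ℝ} {n : ℕ} {x A B : ℝ} (hu : ContDiffAt ℝ n u x)
    (hv : ContDiffAt ℝ n v x) (hA : ∀ i ≤ n, |iteratedDeriv i u x| ≤ A)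
    (hB : ∀ j ≤ n, |iteratedDeriv j v x| ≤ B) :
    |iteratedDeriv n (u * v) x| ≤ 2 ^ n * A * B := by
  have hchoose : (2 : ℝ) ^ n = ∑ i ∈ Finset.range (n + 1), (n.choose i : ℝ) := by
    exact_mod_cast (Nat.sum_range_choose n).symm
  rw [iteratedDeriv_mul hu hv, hchoose, Finset.sum_mul, Finset.sum_mul]
  refine (Finset.abs_sum_le_sum_abs _ _).trans (Finset.sum_le_sum fun i hi => ?_)
  have hi : i ≤ n := Nat.lt_succ_iff.mp (Finset.mem_range.mp hi)
  have hA0 : 0 ≤ A := (abs_nonneg _).trans (hA 0 (Nat.zero_le n))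
  rw [abs_mul, abs_mul, Nat.abs_cast]
  gcongr
  · exact hA i hi
  · exact hB _ (Nat.sub_le n i)

theorem abs_integral_kernel_mul_sub_le {k ψ : ℝ → ℝ} (hk_nonneg : ∀ u, 0 ≤ k u)
    (hk_meas : AEStronglyMeasurable k) (hk1_int : Integrable fun u => u * k u)
    (hk_mean : ∫ u, u * k u = 0) (hk2_int : Integrable fun u => u ^ 2 * k u)
    (hk3_int : Integrable fun u => |u| ^ 3 * k u) (hψ : Continuous ψ) {c₁ c₂ K : ℝ}
    (hψ_taylor : ∀ t, |ψ t - c₁ * t - c₂ * t ^ 2| ≤ K * |t| ^ 3) (h : ℝ) :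
    |(∫ u, k u * ψ (u * h)) - h ^ 2 * (∫ u, u ^ 2 * k u) * c₂|
      ≤ K * (∫ u, |u| ^ 3 * k u) * |h| ^ 3 := by
  set R : ℝ → ℝ := fun u => k u * (ψ (u * h) - c₁ * (u * h) - c₂ * (u * h) ^ 2)
  have hR_le : ∀ u, ‖R u‖ ≤ K * |h| ^ 3 * (|u| ^ 3 * k u) := fun u => calc
    ‖R u‖ = k u * |ψ (u * h) - c₁ * (u * h) - c₂ * (u * h) ^ 2| := by
      rw [Real.norm_eq_abs, abs_mul, abs_of_nonneg (hk_nonneg u)]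
    _ ≤ k u * (K * |u * h| ^ 3) := mul_le_mul_of_nonneg_left (hψ_taylor _) (hk_nonneg u)
    _ = K * |h| ^ 3 * (|u| ^ 3 * k u) := by rw [abs_mul]; ring
  have hR_int : Integrable R :=
    (hk3_int.const_mul _).mono' (hk_meas.mul (by fun_prop : Continuous fun u =>
      ψ (u * h) - c₁ * (u * h) - c₂ * (u * h) ^ 2).aestronglyMeasurable) (ae_of_all _ hR_le)
  have hsplit : ∫ u, k u * ψ (u * h) =
      c₁ * h * (∫ u, u * k u) + c₂ * h ^ 2 * (∫ u, u ^ 2 * k u) + ∫ u, R u := by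
    rw [← integral_const_mul, ← integral_const_mul,
      ← integral_add (hk1_int.const_mul _) (hk2_int.const_mul _),
      ← integral_add (f := fun u => c₁ * h * (u * k u) + c₂ * h ^ 2 * (u ^ 2 * k u))
        ((hk1_int.const_mul _).add (hk2_int.const_mul _)) hR_int]
    congr 1 with u
    simp only [R]
    ring
  calc |(∫ u, k u * ψ (u * h)) - h ^ 2 * (∫ u, u ^ 2 * k u) * c₂| = ‖∫ u, R u‖ := by
        rw [hsplit, hk_mean, Real.norm_eq_abs]; ring_nf
    _ ≤ ∫ u, K * |h| ^ 3 * (|u| ^ 3 * k u) :=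
        norm_integral_le_of_norm_le (hk3_int.const_mul _) (ae_of_all _ hR_le)
    _ = K * (∫ u, |u| ^ 3 * k u) * |h| ^ 3 := by rw [integral_const_mul]; ring

theorem forall_abs_iteratedDeriv_le_of_le_three {g : ℝ → ℝ} {C : ℝ}
    (h : ∀ x, |g x| ≤ C ∧ |deriv g x| ≤ C ∧ |iteratedDeriv 2 g x| ≤ C ∧
      |iteratedDeriv 3 g x| ≤ C) :
    ∀ i ≤ 3, ∀ x, |iteratedDeriv i g x| ≤ C := by
  intro i hi x
  interval_cases i
  · simpa using (h x).1
  · simpa using (h x).2.1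
  · exact (h x).2.2.1
  · exact (h x).2.2.2

-- `8 / 3 = 2 ^ 3 * 2 / 3!`: Leibniz with `|g - g a| ≤ 2 * A`, then the Lagrange remainder.
theorem abs_sub_mul_sub_taylor_le {g f : ℝ → ℝ} (hg : ContDiff ℝ 3 g) (hf : ContDiff ℝ 3 f)
    {A B : ℝ} (hgA : ∀ i ≤ 3, ∀ x, |iteratedDeriv i g x| ≤ A)
    (hfB : ∀ j ≤ 3, ∀ x, |iteratedDeriv j f x| ≤ B) (a t : ℝ) :
    |(g (a + t) - g a) * f (a + t) - deriv g a * f a * t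
      - (deriv g a * deriv f a + 1 / 2 * iteratedDeriv 2 g a * f a) * t ^ 2|
      ≤ 8 / 3 * A * B * |t| ^ 3 := by
  set u : ℝ → ℝ := fun x => g x - g a
  have hu : ContDiff ℝ 3 u := hg.sub contDiff_const
  have hu_iter (n : ℕ) : iteratedDeriv (n + 1) u = iteratedDeriv (n + 1) g := by
    rw [iteratedDeriv_succ', iteratedDeriv_succ']
    congr 1
    funext x
    exact deriv_sub_const (g a)
  have huA : ∀ i ≤ 3, ∀ x, |iteratedDeriv i u x| ≤ 2 * A := by
    have hA0 : 0 ≤ A := (abs_nonneg _).trans (hgA 0 (by norm_num) a)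
    rintro (_ | i) hi x
    · simpa [u, two_mul] using (abs_sub _ _).trans (add_le_add (hgA 0 hi x) (hgA 0 hi a))
    · rw [hu_iter]
      linarith [hgA (i + 1) hi x]
  have hM (x : ℝ) : |iteratedDeriv 3 (u * f) x| ≤ 2 ^ 3 * (2 * A) * B :=
    abs_iteratedDeriv_mul_le hu.contDiffAt hf.contDiffAt (fun i hi => huA i hi x)
      (fun j hj => hfB j hj x)
  have h1 : iteratedDeriv 1 (u * f) a = deriv g a * f a := by
    rw [iteratedDeriv_mul (hu.of_le (by norm_num)).contDiffAt (hf.of_le (by norm_num)).contDiffAt]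
    simp [Finset.sum_range_succ, hu_iter, u]
  have h2 : iteratedDeriv 2 (u * f) a =
      2 * deriv g a * deriv f a + iteratedDeriv 2 g a * f a := by
    rw [iteratedDeriv_mul (hu.of_le (by norm_num)).contDiffAt (hf.of_le (by norm_num)).contDiffAt]
    simp [Finset.sum_range_succ, hu_iter, u]
  have htaylor :=
    abs_sub_taylor_le_of_abs_iteratedDeriv_le (f := u * f) (n := 2) (hu.mul hf) hM a (a + t)
  simp only [Finset.sum_range_succ, Finset.sum_range_zero, h1, h2, iteratedDeriv_zero,
    add_sub_cancel_left] at htaylor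
  convert htaylor using 2
  · simp only [Pi.mul_apply, u, sub_self, zero_mul]
    ring
  · norm_num [Nat.factorial]
    ring

theorem second_order_kernel_expansion_general
    (k : ℝ → ℝ) (hk_nonneg : ∀ u, 0 ≤ k u) (hk_int : Integrable k)
    (hk_mean_int : Integrable (fun u => u * k u)) (hk_mean : (∫ u, u * k u) = 0)
    (κ2 : ℝ) (hκ2_int : Integrable (fun u => u ^ 2 * k u))
    (hκ2_def : κ2 = ∫ u, u ^ 2 * k u)
    (hk3_int : Integrable (fun u => |u| ^ 3 * k u))
    (g f : ℝ → ℝ) (hg : ContDiff ℝ 3 g) (hf : ContDiff ℝ 3 f)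
    (hgb : ∃ C, ∀ x, |g x| ≤ C ∧ |deriv g x| ≤ C ∧ |iteratedDeriv 2 g x| ≤ C ∧
      |iteratedDeriv 3 g x| ≤ C)
    (hfb : ∃ C, ∀ x, |f x| ≤ C ∧ |deriv f x| ≤ C ∧ |iteratedDeriv 2 f x| ≤ C ∧
      |iteratedDeriv 3 f x| ≤ C)
    (a : ℝ) :
    (fun h : ℝ =>
        (∫ u, k u * (g (a + u * h) - g a) * f (a + u * h)) -
          h ^ 2 * κ2 * (deriv g a * deriv f a + (1 / 2) * iteratedDeriv 2 g a * f a))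
      =O[nhdsWithin 0 (Set.Ioi 0)] (fun h : ℝ => h ^ 3) := by
  obtain ⟨A, hA⟩ := hgb
  obtain ⟨B, hB⟩ := hfb
  have hψ : Continuous fun t => (g (a + t) - g a) * f (a + t) := by fun_prop
  have hψ_taylor := abs_sub_mul_sub_taylor_le hg hf
    (forall_abs_iteratedDeriv_le_of_le_three hA) (forall_abs_iteratedDeriv_le_of_le_three hB) a
  refine isBigO_of_le' (c := 8 / 3 * A * B * ∫ u, |u| ^ 3 * k u) _ fun h => ?_
  simpa only [Real.norm_eq_abs, abs_pow, mul_assoc, hκ2_def] using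
    abs_integral_kernel_mul_sub_le hk_nonneg hk_int.1 hk_mean_int hk_mean hκ2_int hk3_int hψ
      hψ_taylor h

/-- **Second-order kernel expansion lemma.**
`k : ℝ → ℝ` is a nonnegative bounded (integrable) kernel with `∫ k = 1`, `∫ u k(u) du = 0`,
`0 < κ₂ := ∫ u² k(u) du < ∞` and `∫ |u|³ k(u) du < ∞`.
If `g, f : ℝ → ℝ` are three times continuously differentiable with `g`, `f` and their first
three derivatives bounded, then for each `a ∈ ℝ`, as `h → 0⁺`,
`∫ k(u) (g(a+uh) − g(a)) f(a+uh) du = h² κ₂ (g'(a) f'(a) + (1/2) g''(a) f(a)) + O(h³)`. -/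
theorem second_order_kernel_expansion
    (k : ℝ → ℝ) (hk_nonneg : ∀ u, 0 ≤ k u) (hk_bdd : ∃ C, ∀ u, k u ≤ C)
    (hk_int : Integrable k) (hk_one : (∫ u, k u) = 1)
    (hk_mean_int : Integrable (fun u => u * k u)) (hk_mean : (∫ u, u * k u) = 0)
    (κ2 : ℝ) (hκ2_int : Integrable (fun u => u ^ 2 * k u))
    (hκ2_def : κ2 = ∫ u, u ^ 2 * k u) (hκ2_pos : 0 < κ2)
    (hk3_int : Integrable (fun u => |u| ^ 3 * k u))
    (g f : ℝ → ℝ) (hg : ContDiff ℝ 3 g) (hf : ContDiff ℝ 3 f)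
    (hgb : ∃ C, ∀ x, |g x| ≤ C ∧ |deriv g x| ≤ C ∧ |iteratedDeriv 2 g x| ≤ C ∧
      |iteratedDeriv 3 g x| ≤ C)
    (hfb : ∃ C, ∀ x, |f x| ≤ C ∧ |deriv f x| ≤ C ∧ |iteratedDeriv 2 f x| ≤ C ∧
      |iteratedDeriv 3 f x| ≤ C)
    (a : ℝ) :
    (fun h : ℝ =>
        (∫ u, k u * (g (a + u * h) - g a) * f (a + u * h)) -
          h ^ 2 * κ2 * (deriv g a * deriv f a + (1 / 2) * iteratedDeriv 2 g a * f a))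
      =O[nhdsWithin 0 (Set.Ioi 0)] (fun h : ℝ => h ^ 3) :=
  second_order_kernel_expansion_general k hk_nonneg hk_int hk_mean_int hk_mean κ2 hκ2_int hκ2_def
    hk3_int g f hg hf hgb hfb a
end

section
/- Cross-kernel (covariance) lemma: let g : ℝ → ℝ be Lipschitz and f : ℝ → ℝ be bounded and integrable. Then for any fixed a ≠ a' in ℝ, there is a constant C such that for all sufficiently small h > 0, | h · ∫ K_h(t−a) K_h(t−a') (g(t) − g(a)) f(t) dt | ≤ C h; in particular h · ∫ K_h(t−a) K_h(t−a') (g(t) − g(a)) f(t) dt → 0 as h → 0⁺. -/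
open MeasureTheory Filter Real Set Asymptotics

/-- **Cross-kernel (covariance) lemma.**
`k : ℝ → ℝ` is a nonnegative bounded kernel with `∫ k = 1` and `∫ |u| k(u) du < ∞`;
`K_h(u) = (1/h) k(u/h)`.  If `g : ℝ → ℝ` is Lipschitz and `f : ℝ → ℝ` is bounded and
integrable, then for any fixed `a ≠ a'` there is a constant `C` such that for all
sufficiently small `h > 0`,
`|h ∫ K_h(t−a) K_h(t−a') (g(t) − g(a)) f(t) dt| ≤ C h`; in particular
`h ∫ K_h(t−a) K_h(t−a') (g(t) − g(a)) f(t) dt → 0` as `h → 0⁺`. -/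
theorem cross_kernel_covariance_lemma
    (k : ℝ → ℝ) (hk_nonneg : ∀ u, 0 ≤ k u) (hk_bdd : ∃ C, ∀ u, k u ≤ C)
    (hk_int : Integrable k) (hk_one : (∫ u, k u) = 1)
    (hk_mom : Integrable (fun u => |u| * k u))
    (g f : ℝ → ℝ) (Lg : NNReal) (hg : LipschitzWith Lg g)
    (hf_bdd : ∃ C, ∀ t, |f t| ≤ C) (hf_int : Integrable f)
    (a a' : ℝ) (haa' : a ≠ a') :
    (∃ C : ℝ, ∀ᶠ h : ℝ in nhdsWithin 0 (Set.Ioi 0),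
        |h * ∫ t, ((1 / h) * k ((t - a) / h)) * ((1 / h) * k ((t - a') / h)) *
          (g t - g a) * f t| ≤ C * h) ∧
      Tendsto (fun h : ℝ =>
          h * ∫ t, ((1 / h) * k ((t - a) / h)) * ((1 / h) * k ((t - a') / h)) *
            (g t - g a) * f t)
        (nhdsWithin 0 (Set.Ioi 0)) (nhds 0) := by
  obtain ⟨Ck, hCk⟩ := hk_bdd
  obtain ⟨Cf, hCf⟩ := hf_bdd
  have hCk0 : 0 ≤ Ck := le_trans (hk_nonneg 0) (hCk 0)
  have hCf0 : 0 ≤ Cf := le_trans (abs_nonneg _) (hCf 0)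
  set m : ℝ → ℝ := fun u => |u| * k u with hm
  set M : ℝ := ∫ u, m u with hM
  have hM0 : 0 ≤ M := integral_nonneg fun u => mul_nonneg (abs_nonneg _) (hk_nonneg u)
  set C : ℝ := Ck * Lg * Cf * M with hC
  have hC0 : 0 ≤ C := by positivity
  -- The key bound, valid for every h > 0.
  have key : ∀ h : ℝ, 0 < h →
      |h * ∫ t, ((1 / h) * k ((t - a) / h)) * ((1 / h) * k ((t - a') / h)) *
          (g t - g a) * f t| ≤ C * h := by
    intro h hh
    have hne : h ≠ 0 := ne_of_gt hh
    -- the bounding function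
    set B : ℝ → ℝ := fun t => (Ck * Lg * Cf / h) * m ((t - a) / h) with hB
    have hBint : Integrable B := by
      have h1 : Integrable (fun t : ℝ => m (t / h)) := hk_mom.comp_div hne
      have h2 : Integrable (fun t : ℝ => m ((t - a) / h)) := h1.comp_sub_right a
      exact h2.const_mul _
    have hBval : (∫ t, B t) = Ck * Lg * Cf * M := by
      rw [hB]
      rw [integral_const_mul]
      have h1 : (∫ t : ℝ, m ((t - a) / h)) = ∫ t : ℝ, m (t / h) := by
        exact integral_sub_right_eq_self (fun t => m (t / h)) a
      rw [h1, MeasureTheory.Measure.integral_comp_div m h, abs_of_pos hh]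
      field_simp
      ring
    have hbound : ∀ t, ‖((1 / h) * k ((t - a) / h)) * ((1 / h) * k ((t - a') / h)) *
        (g t - g a) * f t‖ ≤ B t := by
      intro t
      have hk1 : 0 ≤ k ((t - a) / h) := hk_nonneg _
      have hk2 : 0 ≤ k ((t - a') / h) := hk_nonneg _
      have hg1 : |g t - g a| ≤ Lg * |t - a| := by
        simpa [Real.dist_eq] using hg.dist_le_mul t a
      have hta : |t - a| = h * |(t - a) / h| := by
        rw [abs_div, abs_of_pos hh]; field_simp
      rw [Real.norm_eq_abs]
      calc |((1 / h) * k ((t - a) / h)) * ((1 / h) * k ((t - a') / h)) *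
            (g t - g a) * f t|
          = ((1 / h) * k ((t - a) / h)) * ((1 / h) * k ((t - a') / h)) *
            |g t - g a| * |f t| := by
            have hA1 : 0 ≤ (1 / h) * k ((t - a) / h) :=
              mul_nonneg (by positivity) hk1
            have hA2 : 0 ≤ (1 / h) * k ((t - a') / h) :=
              mul_nonneg (by positivity) hk2
            rw [abs_mul, abs_mul, abs_mul, abs_of_nonneg hA1, abs_of_nonneg hA2]
        _ ≤ ((1 / h) * k ((t - a) / h)) * ((1 / h) * Ck) * (Lg * |t - a|) * Cf := by
            gcongr <;> first
              | exact hCk _ | exact hCf _ | exact hg1 | positivity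
              | exact mul_nonneg (by positivity) (hk_nonneg _)
              | exact mul_nonneg (mul_nonneg (by positivity) (hk_nonneg _)) (abs_nonneg _)
        _ = B t := by
            rw [hB, hm, hta]; field_simp
    have hint : |∫ t, ((1 / h) * k ((t - a) / h)) * ((1 / h) * k ((t - a') / h)) *
        (g t - g a) * f t| ≤ Ck * Lg * Cf * M := by
      calc |∫ t, ((1 / h) * k ((t - a) / h)) * ((1 / h) * k ((t - a') / h)) *
            (g t - g a) * f t|
          ≤ ∫ t, B t := by
            rw [← Real.norm_eq_abs]
            apply norm_integral_le_of_norm_le hBint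
            filter_upwards with t using hbound t
        _ = Ck * Lg * Cf * M := hBval
    rw [abs_mul, abs_of_pos hh]
    calc h * |∫ t, ((1 / h) * k ((t - a) / h)) * ((1 / h) * k ((t - a') / h)) *
          (g t - g a) * f t| ≤ h * (Ck * Lg * Cf * M) := by gcongr
      _ = C * h := by rw [hC]; ring
  refine ⟨⟨C, ?_⟩, ?_⟩
  · filter_upwards [self_mem_nhdsWithin] with h (hh : 0 < h) using key h hh
  · apply squeeze_zero_norm' (a := fun h : ℝ => C * h)
    · filter_upwards [self_mem_nhdsWithin] with h (hh : 0 < h) using key h hh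
    · have : Tendsto (fun h : ℝ => C * h) (nhds 0) (nhds (C * 0)) :=
        (continuous_const.mul continuous_id).tendsto 0
      simpa using this.mono_left nhdsWithin_le_nhds
end
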